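/- Let C1, C2 ⊆ F4^ℓ be linear codes with minimum Hamming distances d1, d2. The minimum sum-rank distance of SR(C1,C2) is at least min{d1, 2*d2}. -/

import Mathlib

open scoped Classical

noncomputable section

/-- The field with 4 elements. -/
abbrev F4 := GaloisField 2 2

noncomputable instance : Fintype F4 := Fintype.ofFinite _

/-- The `F2`-linear map `x ↦ x1*x + x2*x^2` on `F4`. -/
noncomputable def Lmap (x1 x2 : F4) : F4 →ₗ[ZMod 2] F4 where
  toFun x := x1 * x + x2 * x ^ 2
  map_add' x y := by
    have h : (x + y) ^ 2 = x ^ 2 + y ^ 2 := add_pow_char x y 2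
    rw [h]; ring
  map_smul' c x := by
    have hc : c ^ 2 = c := ZMod.pow_card c
    simp only [Algebra.smul_def, RingHom.id_apply, mul_pow, ← map_pow, hc]
    ring

/-- `F2`-rank of an `F2`-linear endomorphism of `F4`. -/
noncomputable def rk (f : F4 →ₗ[ZMod 2] F4) : ℕ :=
  Module.finrank (ZMod 2) (LinearMap.range f)

/-- Sum-rank weight of `a1*x + a2*x^2`. -/
noncomputable def srWt {ℓ : ℕ} (a1 a2 : Fin ℓ → F4) : ℕ :=
  ∑ i, rk (Lmap (a1 i) (a2 i))

/-! At a coordinate where `a1 ≠ 0`, the map `x ↦ a1 x + a2 x²` is a nonzero polynomial function of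
degree at most two on the four points of `F4`, so it is not identically zero and has rank at least
one; hence `wt_sr ≥ wt_H(a1) ≥ d1`. If `a1 = 0`, every coordinate with `a2 ≠ 0` carries the
injective map `x ↦ a2 x²`, of rank two, so `wt_sr = 2 wt_H(a2) ≥ 2 d2`. -/

lemma Lmap_apply (x1 x2 x : F4) : Lmap x1 x2 x = x1 * x + x2 * x ^ 2 := rfl

lemma card_F4 : Fintype.card F4 = 4 := by
  rw [Fintype.card_eq_nat_card, GaloisField.card 2 2 two_ne_zero]; norm_num

open Polynomial in
lemma eq_zero_of_forall_mul_add_mul_sq_eq_zero {K : Type*} [Field K] [Fintype K]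
    (hK : 2 < Fintype.card K) {a b : K} (h : ∀ x, a * x + b * x ^ 2 = 0) : a = 0 := by
  have hp : C a * X + C b * X ^ 2 = 0 := by
    refine eq_zero_of_natDegree_lt_card_of_eval_eq_zero _ Function.injective_id
      (fun x => by simpa using h x) ?_
    have hdeg : (C a * X + C b * X ^ 2).natDegree ≤ 2 := by compute_degree
    exact hdeg.trans_lt hK
  simpa using congrArg (Polynomial.coeff · 1) hp

lemma one_le_rk_Lmap {x1 : F4} (x2 : F4) (h1 : x1 ≠ 0) : 1 ≤ rk (Lmap x1 x2) := by
  refine Submodule.one_le_finrank_iff.mpr fun hbot => h1 ?_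
  exact eq_zero_of_forall_mul_add_mul_sq_eq_zero (by rw [card_F4]; norm_num)
    fun x => LinearMap.congr_fun (LinearMap.range_eq_bot.mp hbot) x

lemma rk_Lmap_zero_left {x2 : F4} (h2 : x2 ≠ 0) : rk (Lmap 0 x2) = 2 := by
  have hinj : Function.Injective (Lmap 0 x2) := fun a b hab => by
    simp only [Lmap_apply, zero_mul, zero_add, mul_right_inj' h2] at hab
    exact frobenius_inj F4 2 hab
  rw [rk, LinearMap.finrank_range_of_inj hinj, GaloisField.finrank 2 two_ne_zero]

lemma rk_Lmap_zero_zero : rk (Lmap 0 0) = 0 := by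
  have hzero : Lmap 0 0 = 0 := LinearMap.ext fun x => by simp [Lmap_apply]
  rw [rk, hzero, LinearMap.range_zero, finrank_bot]

lemma hammingNorm_le_srWt {ℓ : ℕ} (a1 a2 : Fin ℓ → F4) : hammingNorm a1 ≤ srWt a1 a2 := by
  rw [hammingNorm, Finset.card_eq_sum_ones, srWt]
  calc ∑ i ∈ Finset.univ.filter (a1 · ≠ 0), 1
      ≤ ∑ i ∈ Finset.univ.filter (a1 · ≠ 0), rk (Lmap (a1 i) (a2 i)) :=
        Finset.sum_le_sum fun i hi => one_le_rk_Lmap _ (Finset.mem_filter.mp hi).2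
    _ ≤ ∑ i, rk (Lmap (a1 i) (a2 i)) := Finset.sum_le_sum_of_subset (Finset.filter_subset _ _)

lemma srWt_zero_left {ℓ : ℕ} (a2 : Fin ℓ → F4) : srWt 0 a2 = 2 * hammingNorm a2 := by
  rw [srWt, hammingNorm, Finset.card_eq_sum_ones, Finset.mul_sum, Finset.sum_filter]
  refine Finset.sum_congr rfl fun i _ => ?_
  by_cases h : a2 i = 0
  · simp [h, rk_Lmap_zero_zero]
  · simp [h, rk_Lmap_zero_left h]

theorem stmt7_general {ℓ : ℕ} (C1 C2 : Submodule F4 (Fin ℓ → F4))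
    (d1 d2 dsr : ℕ)
    (hd1 : IsLeast {w | ∃ c ∈ C1, c ≠ 0 ∧ hammingNorm c = w} d1)
    (hd2 : IsLeast {w | ∃ c ∈ C2, c ≠ 0 ∧ hammingNorm c = w} d2)
    (hdsr : IsLeast {w | ∃ a1 ∈ C1, ∃ a2 ∈ C2, (a1, a2) ≠ (0, 0) ∧ srWt a1 a2 = w} dsr) :
    min d1 (2 * d2) ≤ dsr := by
  obtain ⟨a1, ha1, a2, ha2, hne, rfl⟩ := hdsr.1
  rcases eq_or_ne a1 0 with rfl | h1
  · have h2 : a2 ≠ 0 := fun h => hne (by rw [h])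
    have hd2_le : d2 ≤ hammingNorm a2 := hd2.2 ⟨a2, ha2, h2, rfl⟩
    rw [srWt_zero_left]
    omega
  · exact (min_le_left _ _).trans <| (hd1.2 ⟨a1, ha1, h1, rfl⟩).trans (hammingNorm_le_srWt a1 a2)

theorem stmt7 {ℓ : ℕ} (C1 C2 : Submodule F4 (Fin ℓ → F4))
    (hC1 : C1 ≠ ⊥) (hC2 : C2 ≠ ⊥) (d1 d2 dsr : ℕ)
    (hd1 : IsLeast {w | ∃ c ∈ C1, c ≠ 0 ∧ hammingNorm c = w} d1)
    (hd2 : IsLeast {w | ∃ c ∈ C2, c ≠ 0 ∧ hammingNorm c = w} d2)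
    (hdsr : IsLeast {w | ∃ a1 ∈ C1, ∃ a2 ∈ C2, (a1, a2) ≠ (0, 0) ∧ srWt a1 a2 = w} dsr) :
    min d1 (2 * d2) ≤ dsr :=
  stmt7_general C1 C2 d1 d2 dsr hd1 hd2 hdsr
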